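/- arXiv:2309.00792 — 2 statements merged into one kernel-verified Lean document; each statement's English description precedes it below -/
import Mathlib

section
/- Let H̄ ∈ ℂ^{M_r×N}, F̄ ∈ ℂ^{N×N_s}, C ∈ ℂ^{M_r×M_r} Hermitian positive definite, and W ∈ ℂ^{M_r×N_s} with W^H C W invertible. Then log det(I + F̄^H H̄^H W (W^H C W)^{−1} W^H H̄ F̄) ≤ log det(I + F̄^H H̄^H C^{−1} H̄ F̄), and equality holds when W = (H̄F̄F̄^H H̄^H + C)^{−1} H̄F̄ (the MMSE receiver). -/
open scoped Matrix ComplexOrder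

/-- `det (1 + N) ≥ 1` for a positive semidefinite `N`. -/
lemma aux_one_le_det_one_add {n : Type*} [Fintype n] [DecidableEq n] {N : Matrix n n ℂ}
    (hN : N.PosSemidef) : (1 : ℂ) ≤ (1 + N).det := by
  have hH := hN.isHermitian
  set U : Matrix n n ℂ := (hH.eigenvectorUnitary : Matrix n n ℂ) with hUdef
  have hU : U * star U = 1 := Matrix.mem_unitaryGroup_iff.mp hH.eigenvectorUnitary.2
  set D : Matrix n n ℂ := Matrix.diagonal (RCLike.ofReal ∘ hH.eigenvalues) with hDdef
  have key : 1 + N = U * (1 + D) * star U := by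
    rw [Matrix.mul_add, Matrix.add_mul, Matrix.mul_one, hU]
    exact congrArg (1 + ·) hH.spectral_theorem
  rw [key, Matrix.det_mul_right_comm, hU, Matrix.one_mul]
  have h1D : (1 : Matrix n n ℂ) + D = Matrix.diagonal
      (fun i => ((1 + hH.eigenvalues i : ℝ) : ℂ)) := by
    rw [hDdef, ← Matrix.diagonal_one, Matrix.diagonal_add]
    congr 1
    funext i
    simp
  rw [h1D, Matrix.det_diagonal, ← Complex.ofReal_prod, ← Complex.ofReal_one,
    Complex.real_le_real]
  calc (1:ℝ) = ∏ _i : n, 1 := by simp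
    _ ≤ ∏ i : n, (1 + hH.eigenvalues i) :=
        Finset.prod_le_prod (by simp) fun i _ => by linarith [hN.eigenvalues_nonneg i]

open scoped MatrixOrder in
/-- Monotonicity of determinant: `det M ≤ det (M + Δ)` for `M` posdef, `Δ` possemidef. -/
lemma aux_det_le_det_add {n : Type*} [Fintype n] [DecidableEq n] {M Δ : Matrix n n ℂ}
    (hM : M.PosDef) (hΔ : Δ.PosSemidef) : M.det ≤ (M + Δ).det := by
  set R : Matrix n n ℂ := CFC.sqrt M with hRdef
  have hR : R.PosSemidef := Matrix.LE.le.posSemidef (CFC.sqrt_nonneg M)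
  have hRR : R * R = M := CFC.sqrt_mul_sqrt_self M hM.posSemidef.nonneg
  have hRdetu : IsUnit R.det := by
    have : R.det * R.det = M.det := by rw [← Matrix.det_mul, hRR]
    have hMd : M.det ≠ 0 := hM.det_pos.ne'
    exact (isUnit_iff_ne_zero).mpr fun h => hMd (by rw [← this, h, mul_zero])
  have hRih : (R⁻¹)ᴴ = R⁻¹ := hR.isHermitian.inv
  set Nm : Matrix n n ℂ := R⁻¹ * Δ * R⁻¹ with hNdef
  have hN : Nm.PosSemidef := by
    have := hΔ.conjTranspose_mul_mul_same R⁻¹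
    rwa [hRih] at this
  have key : M + Δ = R * (1 + Nm) * R := by
    rw [Matrix.mul_add, Matrix.add_mul, Matrix.mul_one, hRR, hNdef]
    congr 1
    rw [show R * (R⁻¹ * Δ * R⁻¹) = R * R⁻¹ * Δ * R⁻¹ by simp [Matrix.mul_assoc],
      Matrix.mul_nonsing_inv _ hRdetu, Matrix.one_mul, Matrix.mul_assoc,
      Matrix.nonsing_inv_mul _ hRdetu, Matrix.mul_one]
  rw [key, Matrix.det_mul, Matrix.det_mul, mul_comm R.det, mul_assoc, ← Matrix.det_mul, hRR]
  exact le_mul_of_one_le_left hM.det_pos.le (aux_one_le_det_one_add hN)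

/-- The orthogonal-projection defect `C⁻¹ - W (Wᴴ C W)⁻¹ Wᴴ` is positive semidefinite. -/
lemma aux_proj {m p : Type*} [Fintype m] [Fintype p] [DecidableEq m] [DecidableEq p]
    {C : Matrix m m ℂ} (W : Matrix m p ℂ) (hC : C.PosDef) (hW : IsUnit (Wᴴ * C * W)) :
    (C⁻¹ - W * (Wᴴ * C * W)⁻¹ * Wᴴ).PosSemidef := by
  have hudet : IsUnit (Wᴴ * C * W).det := (Matrix.isUnit_iff_isUnit_det _).mp hW
  have hCdet : IsUnit C.det := (Matrix.isUnit_iff_isUnit_det C).mp hC.isUnit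
  have huh : (Wᴴ * C * W)ᴴ = Wᴴ * C * W := by
    simp [Matrix.conjTranspose_mul, Matrix.mul_assoc, hC.1.eq]
  have hDh : (C⁻¹ - W * (Wᴴ * C * W)⁻¹ * Wᴴ)ᴴ = C⁻¹ - W * (Wᴴ * C * W)⁻¹ * Wᴴ := by
    rw [Matrix.conjTranspose_sub, hC.1.inv.eq]
    congr 1
    rw [Matrix.conjTranspose_mul, Matrix.conjTranspose_mul, Matrix.conjTranspose_nonsing_inv,
      huh, Matrix.conjTranspose_conjTranspose]
    simp only [Matrix.mul_assoc]
  have hPCP : (W * (Wᴴ * C * W)⁻¹ * Wᴴ) * C * (W * (Wᴴ * C * W)⁻¹ * Wᴴ)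
      = W * (Wᴴ * C * W)⁻¹ * Wᴴ := by
    calc (W * (Wᴴ * C * W)⁻¹ * Wᴴ) * C * (W * (Wᴴ * C * W)⁻¹ * Wᴴ)
        = W * ((Wᴴ * C * W)⁻¹ * (Wᴴ * C * W) * ((Wᴴ * C * W)⁻¹ * Wᴴ)) := by
          simp only [Matrix.mul_assoc]
      _ = W * (Wᴴ * C * W)⁻¹ * Wᴴ := by
          rw [Matrix.nonsing_inv_mul _ hudet, Matrix.one_mul]
          simp only [Matrix.mul_assoc]
  have hDCD : (C⁻¹ - W * (Wᴴ * C * W)⁻¹ * Wᴴ) * C * (C⁻¹ - W * (Wᴴ * C * W)⁻¹ * Wᴴ)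
      = C⁻¹ - W * (Wᴴ * C * W)⁻¹ * Wᴴ := by
    simp only [Matrix.sub_mul, Matrix.mul_sub]
    rw [Matrix.nonsing_inv_mul _ hCdet, Matrix.one_mul, Matrix.one_mul,
      Matrix.mul_nonsing_inv_cancel_right _ _ hCdet, hPCP]
    abel
  have := hC.posSemidef.conjTranspose_mul_mul_same (C⁻¹ - W * (Wᴴ * C * W)⁻¹ * Wᴴ)
  rw [hDh, hDCD] at this
  exact this

/-- The MMSE identity. -/
lemma aux_mmse {m p : Type*} [Fintype m] [Fintype p] [DecidableEq m] [DecidableEq p]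
    {C : Matrix m m ℂ} (G W : Matrix m p ℂ) (hC : C.PosDef)
    (hWeq : W = (G * Gᴴ + C)⁻¹ * G) (hW : IsUnit (Wᴴ * C * W)) :
    Gᴴ * W * (Wᴴ * C * W)⁻¹ * (Wᴴ * G) = Gᴴ * C⁻¹ * G := by
  have hCdet : IsUnit C.det := (Matrix.isUnit_iff_isUnit_det C).mp hC.isUnit
  set S : Matrix m m ℂ := G * Gᴴ + C with hSdef
  have hS : S.PosDef := Matrix.PosDef.posSemidef_add (Matrix.posSemidef_self_mul_conjTranspose G) hC
  have hSdet : IsUnit S.det := (Matrix.isUnit_iff_isUnit_det S).mp hS.isUnit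
  have hSh : Sᴴ = S := hS.1.eq
  have hWh : Wᴴ = Gᴴ * S⁻¹ := by
    rw [hWeq, Matrix.conjTranspose_mul, Matrix.conjTranspose_nonsing_inv, hSh]
  have hKpsd : (Gᴴ * C⁻¹ * G).PosSemidef := hC.inv.posSemidef.conjTranspose_mul_mul_same G
  have hIK : (1 + Gᴴ * C⁻¹ * G).PosDef := Matrix.PosDef.one.add_posSemidef hKpsd
  have hIKdet : IsUnit (1 + Gᴴ * C⁻¹ * G).det := (Matrix.isUnit_iff_isUnit_det _).mp hIK.isUnit
  have h1 : S * (C⁻¹ * G) = G * (1 + Gᴴ * C⁻¹ * G) := by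
    rw [hSdef, Matrix.add_mul, Matrix.mul_add, Matrix.mul_one,
      Matrix.mul_nonsing_inv_cancel_left _ _ hCdet, add_comm]
    congr 1
    simp only [Matrix.mul_assoc]
  have push : S⁻¹ * G = C⁻¹ * G * (1 + Gᴴ * C⁻¹ * G)⁻¹ := by
    have h2 : C⁻¹ * G = S⁻¹ * (G * (1 + Gᴴ * C⁻¹ * G)) := by
      rw [← h1, Matrix.nonsing_inv_mul_cancel_left _ _ hSdet]
    rw [h2]
    rw [show S⁻¹ * (G * (1 + Gᴴ * C⁻¹ * G)) * (1 + Gᴴ * C⁻¹ * G)⁻¹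
        = S⁻¹ * G * ((1 + Gᴴ * C⁻¹ * G) * (1 + Gᴴ * C⁻¹ * G)⁻¹) by simp only [Matrix.mul_assoc]]
    rw [Matrix.mul_nonsing_inv _ hIKdet, Matrix.mul_one]
  have hTeq : Gᴴ * S⁻¹ * G = Gᴴ * C⁻¹ * G * (1 + Gᴴ * C⁻¹ * G)⁻¹ := by
    rw [Matrix.mul_assoc Gᴴ S⁻¹ G, push]
    simp only [Matrix.mul_assoc]
  have h1T : 1 - Gᴴ * S⁻¹ * G = (1 + Gᴴ * C⁻¹ * G)⁻¹ := by
    rw [hTeq]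
    nth_rewrite 1 [show (1 : Matrix p p ℂ)
      = (1 + Gᴴ * C⁻¹ * G) * (1 + Gᴴ * C⁻¹ * G)⁻¹ from (Matrix.mul_nonsing_inv _ hIKdet).symm]
    rw [← Matrix.sub_mul, add_sub_cancel_right, Matrix.one_mul]
  have hu : Wᴴ * C * W = (Gᴴ * S⁻¹ * G) * (1 - Gᴴ * S⁻¹ * G) := by
    have hCS : C = S - G * Gᴴ := by rw [hSdef, add_sub_cancel_left]
    calc Wᴴ * C * W = Gᴴ * S⁻¹ * (S - G * Gᴴ) * (S⁻¹ * G) := by rw [hWh, hWeq, ← hCS]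
      _ = Gᴴ * (S⁻¹ * S * (S⁻¹ * G)) - Gᴴ * S⁻¹ * G * (Gᴴ * S⁻¹ * G) := by
          rw [Matrix.mul_sub, Matrix.sub_mul]
          congr 1 <;> simp only [Matrix.mul_assoc]
      _ = (Gᴴ * S⁻¹ * G) * (1 - Gᴴ * S⁻¹ * G) := by
          rw [Matrix.nonsing_inv_mul _ hSdet, Matrix.one_mul, Matrix.mul_sub, Matrix.mul_one]
          simp only [Matrix.mul_assoc]
  have hTdet : IsUnit (Gᴴ * S⁻¹ * G).det := by
    have := (Matrix.isUnit_iff_isUnit_det _).mp hW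
    rw [hu, Matrix.det_mul] at this
    exact isUnit_of_mul_isUnit_left this
  have hGW : Gᴴ * W = Gᴴ * S⁻¹ * G := by rw [hWeq, Matrix.mul_assoc]
  have hWG : Wᴴ * G = Gᴴ * S⁻¹ * G := by rw [hWh, Matrix.mul_assoc]
  rw [hGW, hWG, hu, Matrix.mul_inv_rev, h1T, Matrix.nonsing_inv_nonsing_inv _ hIKdet]
  calc Gᴴ * S⁻¹ * G * ((1 + Gᴴ * C⁻¹ * G) * (Gᴴ * S⁻¹ * G)⁻¹) * (Gᴴ * S⁻¹ * G)
      = Gᴴ * S⁻¹ * G * (1 + Gᴴ * C⁻¹ * G) * ((Gᴴ * S⁻¹ * G)⁻¹ * (Gᴴ * S⁻¹ * G)) := by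
        simp only [Matrix.mul_assoc]
    _ = Gᴴ * S⁻¹ * G * (1 + Gᴴ * C⁻¹ * G) := by
        rw [Matrix.nonsing_inv_mul _ hTdet, Matrix.mul_one]
    _ = Gᴴ * C⁻¹ * G := by
        rw [hTeq, Matrix.nonsing_inv_mul_cancel_right _ _ hIKdet]

lemma aux_log_abs_le {a b : ℂ} (ha : 0 < a) (hab : a ≤ b) :
    Real.log (norm a) ≤ Real.log (norm b) := by
  have e : ∀ z : ℂ, 0 ≤ z → norm z = z.re := by
    intro z hz
    obtain ⟨h1, h2⟩ := Complex.le_def.mp hz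
    simp only [Complex.zero_re, Complex.zero_im] at h1 h2
    rw [show z = (z.re : ℂ) from Complex.ext rfl (by simp [← h2]), Complex.norm_real]
    simp [abs_of_nonneg h1]
  have hare : 0 < a.re := by simpa using (Complex.lt_def.mp ha).1
  have habre : a.re ≤ b.re := (Complex.le_def.mp hab).1
  rw [e a ha.le, e b (ha.le.trans hab)]
  exact Real.log_le_log hare habre

/-- The MMSE receiver maximizes the log-det spectral efficiency:
`log det(I + F̄ᴴH̄ᴴW(WᴴCW)⁻¹WᴴH̄F̄) ≤ log det(I + F̄ᴴH̄ᴴC⁻¹H̄F̄)`, with equality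
when `W = (H̄F̄F̄ᴴH̄ᴴ + C)⁻¹H̄F̄`. (Both determinants are positive reals; they
are compared through their absolute values.) -/
theorem stmt12 (Mr N Ns : ℕ) (Hb : Matrix (Fin Mr) (Fin N) ℂ)
    (Fb : Matrix (Fin N) (Fin Ns) ℂ) (C : Matrix (Fin Mr) (Fin Mr) ℂ)
    (hC : C.PosDef) (W : Matrix (Fin Mr) (Fin Ns) ℂ)
    (hW : IsUnit (Wᴴ * C * W)) :
    Real.log (norm
        ((1 + Fbᴴ * Hbᴴ * W * (Wᴴ * C * W)⁻¹ * Wᴴ * Hb * Fb).det)) ≤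
      Real.log (norm ((1 + Fbᴴ * Hbᴴ * C⁻¹ * Hb * Fb).det)) ∧
    (W = (Hb * Fb * Fbᴴ * Hbᴴ + C)⁻¹ * (Hb * Fb) →
      Real.log (norm
          ((1 + Fbᴴ * Hbᴴ * W * (Wᴴ * C * W)⁻¹ * Wᴴ * Hb * Fb).det)) =
        Real.log (norm ((1 + Fbᴴ * Hbᴴ * C⁻¹ * Hb * Fb).det))) := by
  have hudet : IsUnit (Wᴴ * C * W).det := (Matrix.isUnit_iff_isUnit_det _).mp hW
  have eA : Fbᴴ * Hbᴴ * W * (Wᴴ * C * W)⁻¹ * Wᴴ * Hb * Fb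
      = (Hb * Fb)ᴴ * W * (Wᴴ * C * W)⁻¹ * (Wᴴ * (Hb * Fb)) := by
    simp only [Matrix.conjTranspose_mul, Matrix.mul_assoc]
  have eB : Fbᴴ * Hbᴴ * C⁻¹ * Hb * Fb = (Hb * Fb)ᴴ * C⁻¹ * (Hb * Fb) := by
    simp only [Matrix.conjTranspose_mul, Matrix.mul_assoc]
  have hApsd : ((Hb * Fb)ᴴ * W * (Wᴴ * C * W)⁻¹ * (Wᴴ * (Hb * Fb))).PosSemidef := by
    have hinv : ((Wᴴ * C * W)⁻¹).PosSemidef := by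
      have h1 : ((Wᴴ * C * W)⁻¹)ᴴ = (Wᴴ * C * W)⁻¹ := by
        rw [Matrix.conjTranspose_nonsing_inv]
        congr 1
        simp [Matrix.conjTranspose_mul, Matrix.mul_assoc, hC.1.eq]
      have h2 := (hC.posSemidef.conjTranspose_mul_mul_same W).conjTranspose_mul_mul_same
        ((Wᴴ * C * W)⁻¹)
      rwa [h1, Matrix.nonsing_inv_mul _ hudet, Matrix.one_mul] at h2
    have h3 := hinv.conjTranspose_mul_mul_same (Wᴴ * (Hb * Fb))
    have e : (Wᴴ * (Hb * Fb))ᴴ * (Wᴴ * C * W)⁻¹ * (Wᴴ * (Hb * Fb))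
        = (Hb * Fb)ᴴ * W * (Wᴴ * C * W)⁻¹ * (Wᴴ * (Hb * Fb)) := by
      simp only [Matrix.conjTranspose_mul, Matrix.conjTranspose_conjTranspose, Matrix.mul_assoc]
    rwa [e] at h3
  have hBA : ((Hb * Fb)ᴴ * C⁻¹ * (Hb * Fb)
      - (Hb * Fb)ᴴ * W * (Wᴴ * C * W)⁻¹ * (Wᴴ * (Hb * Fb))).PosSemidef := by
    have h4 := (aux_proj W hC hW).conjTranspose_mul_mul_same (Hb * Fb)
    have e : (Hb * Fb)ᴴ * (C⁻¹ - W * (Wᴴ * C * W)⁻¹ * Wᴴ) * (Hb * Fb)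
        = (Hb * Fb)ᴴ * C⁻¹ * (Hb * Fb)
          - (Hb * Fb)ᴴ * W * (Wᴴ * C * W)⁻¹ * (Wᴴ * (Hb * Fb)) := by
      rw [Matrix.mul_sub, Matrix.sub_mul]
      congr 1 <;> simp only [Matrix.mul_assoc]
    rwa [e] at h4
  have h1A : (1 + (Hb * Fb)ᴴ * W * (Wᴴ * C * W)⁻¹ * (Wᴴ * (Hb * Fb))).PosDef :=
    Matrix.PosDef.one.add_posSemidef hApsd
  have hdet : (1 + (Hb * Fb)ᴴ * W * (Wᴴ * C * W)⁻¹ * (Wᴴ * (Hb * Fb))).det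
      ≤ (1 + (Hb * Fb)ᴴ * C⁻¹ * (Hb * Fb)).det := by
    have h := aux_det_le_det_add h1A hBA
    rwa [show (1 : Matrix (Fin Ns) (Fin Ns) ℂ)
        + (Hb * Fb)ᴴ * W * (Wᴴ * C * W)⁻¹ * (Wᴴ * (Hb * Fb))
        + ((Hb * Fb)ᴴ * C⁻¹ * (Hb * Fb)
          - (Hb * Fb)ᴴ * W * (Wᴴ * C * W)⁻¹ * (Wᴴ * (Hb * Fb)))
        = 1 + (Hb * Fb)ᴴ * C⁻¹ * (Hb * Fb) from by abel] at h
  constructor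
  · rw [eA, eB]
    exact aux_log_abs_le h1A.det_pos hdet
  · intro h
    have hWeq : W = ((Hb * Fb) * (Hb * Fb)ᴴ + C)⁻¹ * (Hb * Fb) := by
      rw [h]
      congr 2
      simp only [Matrix.conjTranspose_mul, Matrix.mul_assoc]
    have hm := aux_mmse (Hb * Fb) W hC hWeq hW
    rw [eA, eB, hm]
end

section
/- Suppose W ∈ ℂ^{M_r×N_s}, F_l ∈ ℂ^{M_t×N_s} satisfy W^H H_l F_{l'} = 0 for all l ≠ l'. Then for the DDAM received signal y[n] = ∑_l W^H H_l F_l s[n − κ_l − m_l] e^{j2π(ν_l−ν_l)nT_s} + ∑_l ∑_{l'≠l} W^H H_l F_{l'} s[n − κ_{l'} − m_l] e^{j2π(ν_l−ν_{l'})nT_s} + z̃[n] with κ_l = m_max − m_l, the interference (second) term vanishes identically and y[n] = (∑_{l=1}^L W^H H_l F_l) s[n − m_max] + z̃[n]. -/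
open scoped Matrix BigOperators

/-- DDAM channel transformation: under the zero-forcing conditions
`Wᴴ H_l F_{l'} = 0` for `l ≠ l'` and with `κ_l = m_max − m_l`, the received
signal (desired part plus ISI part plus noise) reduces exactly to the
time-invariant ISI-free form `(∑ Wᴴ H_l F_l) s[n − m_max] + z̃[n]`. -/
theorem stmt18 (L Mt Mr Ns : ℕ)
    (H : Fin L → Matrix (Fin Mr) (Fin Mt) ℂ)
    (F : Fin L → Matrix (Fin Mt) (Fin Ns) ℂ)
    (W : Matrix (Fin Mr) (Fin Ns) ℂ)
    (m : Fin L → ℕ) (ν : Fin L → ℝ) (Ts : ℝ)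
    (s : ℤ → Fin Ns → ℂ) (z : ℤ → Fin Ns → ℂ)
    (hZF : ∀ l l', l ≠ l' → Wᴴ * H l * F l' = 0) (n : ℤ) :
    (∑ l, Complex.exp (2 * Real.pi * (ν l - ν l) * (n : ℝ) * Ts * Complex.I) •
        (Wᴴ * H l * F l).mulVec
          (s (n - ((Finset.univ.sup m - m l : ℕ) : ℤ) - (m l : ℤ)))) +
      (∑ l, ∑ l' ∈ Finset.univ.erase l,
        Complex.exp (2 * Real.pi * (ν l - ν l') * (n : ℝ) * Ts * Complex.I) •
          (Wᴴ * H l * F l').mulVec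
            (s (n - ((Finset.univ.sup m - m l' : ℕ) : ℤ) - (m l : ℤ)))) +
      z n =
    (∑ l, Wᴴ * H l * F l).mulVec (s (n - ((Finset.univ.sup m : ℕ) : ℤ))) + z n := by
  have h2 : (∑ l, ∑ l' ∈ Finset.univ.erase l,
        Complex.exp (2 * Real.pi * (ν l - ν l') * (n : ℝ) * Ts * Complex.I) •
          (Wᴴ * H l * F l').mulVec
            (s (n - ((Finset.univ.sup m - m l' : ℕ) : ℤ) - (m l : ℤ)))) = 0 := by
    apply Finset.sum_eq_zero
    intro l _
    apply Finset.sum_eq_zero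
    intro l' hl'
    rw [hZF l l' (Finset.ne_of_mem_erase hl').symm]
    simp [Matrix.zero_mulVec]
  rw [h2, add_zero]
  congr 1
  have h1 : ∀ l : Fin L,
      (Complex.exp (2 * Real.pi * (ν l - ν l) * (n : ℝ) * Ts * Complex.I) •
        (Wᴴ * H l * F l).mulVec
          (s (n - ((Finset.univ.sup m - m l : ℕ) : ℤ) - (m l : ℤ)))) =
      (Wᴴ * H l * F l).mulVec (s (n - ((Finset.univ.sup m : ℕ) : ℤ))) := by
    intro l
    have hle : m l ≤ Finset.univ.sup m := Finset.le_sup (Finset.mem_univ l)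
    have harg : n - ((Finset.univ.sup m - m l : ℕ) : ℤ) - (m l : ℤ)
        = n - ((Finset.univ.sup m : ℕ) : ℤ) := by
      rw [Nat.cast_sub hle]; ring
    rw [harg]
    simp
  rw [Finset.sum_congr rfl fun l _ => h1 l]
  ext i
  simp only [Finset.sum_apply, Matrix.mulVec, dotProduct, Finset.sum_apply, Finset.sum_mul]
  rw [Finset.sum_comm]
  simp [Matrix.sum_apply, Finset.sum_mul]
end
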